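/- arXiv:2001.02575 — 2 statements merged into one kernel-verified Lean document; each statement's English description precedes it below -/
import Mathlib

section
/- For P, N > 0 with N < 2P, the function f(α) = (1/2)·log₂(1 + (1-α)²P / (N - 2α²P)) defined on 0 ≤ α < √(N/(2P)) attains its minimum at α = N/(2P), and the minimum value is (1/2)·log₂(1/2 + P/N). -/
/-!
Clearing denominators, `1 + (1-α)²P/(N - 2α²P) - (1/2 + P/N) = (N - 2αP)² / (2N(N - 2α²P))`,
which is nonnegative wherever the effective noise variance `N - 2α²P` is positive and vanishes
exactly at `α = N/(2P)`. Since `log₂` is monotone, the capacity is minimised there.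
-/

namespace ScaleBabble

/-- Signal-to-noise ratio of the AWGN channel seen by the receiver when the jammer sends
`-α z + g` with `Var g = N - 2α²P`. -/
noncomputable def effectiveSNR (P N α : ℝ) : ℝ := (1 - α) ^ 2 * P / (N - 2 * α ^ 2 * P)

variable {P N α : ℝ}

theorem one_add_effectiveSNR_sub (hN : N ≠ 0) (hD : N - 2 * α ^ 2 * P ≠ 0) :
    1 + effectiveSNR P N α - (1 / 2 + P / N) =
      (N - 2 * α * P) ^ 2 / (2 * N * (N - 2 * α ^ 2 * P)) := by
  unfold effectiveSNR
  rw [div_add_div _ _ two_ne_zero hN, one_add_div hD, div_sub_div _ _ hD (by positivity)]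
  congr 1 <;> ring

theorem half_add_div_le_one_add_effectiveSNR (hN : 0 < N) (hD : 0 < N - 2 * α ^ 2 * P) :
    1 / 2 + P / N ≤ 1 + effectiveSNR P N α := by
  rw [← sub_nonneg, one_add_effectiveSNR_sub hN.ne' hD.ne']
  positivity

theorem one_add_effectiveSNR_half_div (hP : P ≠ 0) (hN : N ≠ 0) :
    1 + effectiveSNR P N (N / (2 * P)) = 1 / 2 + P / N := by
  rcases eq_or_ne N (2 * P) with rfl | hNP
  -- the denominator vanishes and `x / 0 = 0`, so both sides equal `1`
  · simp only [effectiveSNR, div_self (mul_ne_zero two_ne_zero hP)]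
    field_simp
    norm_num
  · have hD : N - 2 * (N / (2 * P)) ^ 2 * P = N * (2 * P - N) / (2 * P) := by field_simp
    have hNP' : 2 * P - N ≠ 0 := sub_ne_zero.mpr hNP.symm
    rw [← sub_eq_zero, one_add_effectiveSNR_sub hN (by rw [hD]; positivity)]
    field_simp
    ring

theorem effective_noise_pos (hP : 0 < P) (hα : 0 ≤ α) (hαN : α < √(N / (2 * P))) :
    0 < N - 2 * α ^ 2 * P := by
  have := (lt_div_iff₀ (by positivity)).mp ((Real.lt_sqrt hα).mp hαN)
  linarith

end ScaleBabble

open ScaleBabble in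
theorem stmt11_general (P N : ℝ) (hP : 0 < P) (hN : 0 < N) :
    (∀ α : ℝ, 0 ≤ α → α < Real.sqrt (N / (2 * P)) →
      1 / 2 * Real.logb 2
          (1 + (1 - N / (2 * P)) ^ 2 * P / (N - 2 * (N / (2 * P)) ^ 2 * P)) ≤
        1 / 2 * Real.logb 2 (1 + (1 - α) ^ 2 * P / (N - 2 * α ^ 2 * P))) ∧
    1 / 2 * Real.logb 2
        (1 + (1 - N / (2 * P)) ^ 2 * P / (N - 2 * (N / (2 * P)) ^ 2 * P)) =
      1 / 2 * Real.logb 2 (1 / 2 + P / N) := by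
  have hmin := one_add_effectiveSNR_half_div hP.ne' hN.ne'
  unfold effectiveSNR at hmin
  refine ⟨fun α hα hαN => ?_, by rw [hmin]⟩
  rw [hmin]
  gcongr 1 / 2 * Real.logb 2 ?_
  · exact one_lt_two
  · exact half_add_div_le_one_add_effectiveSNR hN (effective_noise_pos hP hα hαN)

/-- The function `f(α) = (1/2)log₂(1 + (1-α)²P/(N - 2α²P))` on `0 ≤ α < √(N/(2P))`
attains its minimum at `α = N/(2P)`, with minimum value `(1/2)log₂(1/2 + P/N)`. -/
theorem stmt11 (P N : ℝ) (hP : 0 < P) (hN : 0 < N) (hNP : N < 2 * P) :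
    (∀ α : ℝ, 0 ≤ α → α < Real.sqrt (N / (2 * P)) →
      1 / 2 * Real.logb 2
          (1 + (1 - N / (2 * P)) ^ 2 * P / (N - 2 * (N / (2 * P)) ^ 2 * P)) ≤
        1 / 2 * Real.logb 2 (1 + (1 - α) ^ 2 * P / (N - 2 * α ^ 2 * P))) ∧
    1 / 2 * Real.logb 2
        (1 + (1 - N / (2 * P)) ^ 2 * P / (N - 2 * (N / (2 * P)) ^ 2 * P)) =
      1 / 2 * Real.logb 2 (1 / 2 + P / N) :=
  stmt11_general P N hP hN
end

section
/- Let P_A, P_B, N_B > 0 with N_B < P_A + P_B. The function f(α) = (1/2)·log₂(1 + (1-α)²P_A / (N_B - α²(P_A+P_B))) on 0 ≤ α < √(N_B/(P_A+P_B)) is minimized at α* = N_B/(P_A+P_B), with minimum value (1/2)·log₂(P_B/(P_A+P_B) + P_A/N_B). -/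
/-- Asymmetric version: `f(α) = (1/2)log₂(1 + (1-α)²P_A/(N_B - α²(P_A+P_B)))` on
`0 ≤ α < √(N_B/(P_A+P_B))` is minimized at `α* = N_B/(P_A+P_B)`, with minimum value
`(1/2)log₂(P_B/(P_A+P_B) + P_A/N_B)`. -/
theorem stmt12 (PA PB NB : ℝ) (hPA : 0 < PA) (hPB : 0 < PB) (hNB : 0 < NB)
    (h : NB < PA + PB) :
    (∀ α : ℝ, 0 ≤ α → α < Real.sqrt (NB / (PA + PB)) →
      1 / 2 * Real.logb 2
          (1 + (1 - NB / (PA + PB)) ^ 2 * PA /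
            (NB - (NB / (PA + PB)) ^ 2 * (PA + PB))) ≤
        1 / 2 * Real.logb 2 (1 + (1 - α) ^ 2 * PA / (NB - α ^ 2 * (PA + PB)))) ∧
    1 / 2 * Real.logb 2
        (1 + (1 - NB / (PA + PB)) ^ 2 * PA /
          (NB - (NB / (PA + PB)) ^ 2 * (PA + PB))) =
      1 / 2 * Real.logb 2 (PB / (PA + PB) + PA / NB) := by
  have hS : (0:ℝ) < PA + PB := by linarith
  have hSne : (PA + PB) ≠ 0 := ne_of_gt hS
  have hNBne : NB ≠ 0 := ne_of_gt hNB
  have hDstar : 0 < NB - (NB / (PA + PB)) ^ 2 * (PA + PB) := by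
    have : NB - (NB / (PA + PB)) ^ 2 * (PA + PB) = NB * (PA + PB - NB) / (PA + PB) := by
      field_simp
    rw [this]
    have h' : 0 < PA + PB - NB := by linarith
    positivity
  have hA : (1 - NB / (PA + PB)) ^ 2 * PA / (NB - (NB / (PA + PB)) ^ 2 * (PA + PB))
      = (PA + PB - NB) * PA / ((PA + PB) * NB) := by
    rw [div_eq_div_iff hDstar.ne' (by positivity)]
    field_simp
  constructor
  · intro α hα0 hαlt
    have hα2 : α ^ 2 < NB / (PA + PB) := by
      have h1 : α ^ 2 < Real.sqrt (NB / (PA + PB)) ^ 2 :=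
        pow_lt_pow_left₀ hαlt hα0 two_ne_zero
      rwa [Real.sq_sqrt (by positivity)] at h1
    have hD : 0 < NB - α ^ 2 * (PA + PB) := by
      have := (lt_div_iff₀ hS).mp hα2
      linarith
    have hkey : (1 - NB / (PA + PB)) ^ 2 * PA / (NB - (NB / (PA + PB)) ^ 2 * (PA + PB))
        ≤ (1 - α) ^ 2 * PA / (NB - α ^ 2 * (PA + PB)) := by
      rw [hA, div_le_div_iff₀ (by positivity) hD]
      nlinarith [mul_nonneg hPA.le (sq_nonneg (α * (PA + PB) - NB))]
    have h1pos : 0 < 1 + (1 - NB / (PA + PB)) ^ 2 * PA /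
        (NB - (NB / (PA + PB)) ^ 2 * (PA + PB)) := by positivity
    have hkey' : 1 + (1 - NB / (PA + PB)) ^ 2 * PA /
        (NB - (NB / (PA + PB)) ^ 2 * (PA + PB)) ≤
        1 + (1 - α) ^ 2 * PA / (NB - α ^ 2 * (PA + PB)) := by linarith
    have hlog := Real.logb_le_logb_of_le (b := 2) (by norm_num) h1pos hkey'
    linarith
  · have heq : 1 + (PA + PB - NB) * PA / ((PA + PB) * NB)
        = PB / (PA + PB) + PA / NB := by
      field_simp
      ring
    rw [hA, heq]
end
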